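/- arXiv:2104.09287 — 5 statements merged into one kernel-verified Lean document; each statement's English description precedes it below -/
import Mathlib

section
/- Let c be a real number, let s and t be positive real numbers, and let H₀ be a nonzero real number. Suppose λ, μ : I → ℝ are twice continuously differentiable functions on a nonempty open interval I ⊆ ℝ such that λ and μ vanish nowhere on I, s·λ(x) + t·μ(x) = H₀ for all x ∈ I, and the equations λ(x)·λ''(x) − 2·λ'(x)² = c·λ(x)² and μ(x)·μ''(x) − 2·μ'(x)² = c·μ(x)² hold for all x ∈ I. Then λ' vanishes identically on I; in particular λ and μ are constant on I. -/
/-!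
Since `s λ + t μ = H₀`, we have `t μ' = -s λ'` and `t μ'' = -s λ''`; eliminating `λ''` between the
two equations and dividing by `H₀ ≠ 0` leaves the first integral `2 s λ'² + c t λ μ = 0`. For
`c = 0` this is `λ' = 0`. For `c ≠ 0`, differentiating the first integral at a point where
`λ' ≠ 0` and using the equation for `λ` gives `3 c λ (s λ - t μ) = 0`, so `λ = H₀ / (2 s)` there.
Thus `λ` is constant on the open set `{λ' ≠ 0}`, which is therefore empty.
-/

open Filter Topology

section Calculus

variable {𝕜 : Type*} [NontriviallyNormedField 𝕜] {f g : 𝕜 → 𝕜} {U : Set 𝕜}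

theorem HasDerivAt.eq_zero_of_eqOn_const {f' x v : 𝕜} (hf : HasDerivAt f f' x)
    (hU : IsOpen U) (hx : x ∈ U) (h : ∀ y ∈ U, f y = v) : f' = 0 := by
  have hloc : f =ᶠ[𝓝 x] fun _ => v := eventually_of_mem (hU.mem_nhds hx) h
  rw [← hf.deriv, hloc.deriv_eq, deriv_const]

theorem mul_deriv_add_mul_deriv_eq_zero (hU : IsOpen U) (hf : DifferentiableOn 𝕜 f U)
    (hg : DifferentiableOn 𝕜 g U) {s t H : 𝕜} (h : ∀ x ∈ U, s * f x + t * g x = H) :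
    ∀ x ∈ U, s * deriv f x + t * deriv g x = 0 := fun x hx =>
  ((((hf x hx).differentiableAt (hU.mem_nhds hx)).hasDerivAt.const_mul s).add
    (((hg x hx).differentiableAt (hU.mem_nhds hx)).hasDerivAt.const_mul t)).eq_zero_of_eqOn_const
    hU hx h

theorem IsOpen.deriv_eq_zero_of_deriv_ne_zero_imp_eq (hU : IsOpen U)
    (hf' : ContinuousOn (deriv f) U) {v : 𝕜} (h : ∀ x ∈ U, deriv f x ≠ 0 → f x = v) :
    ∀ x ∈ U, deriv f x = 0 := by
  intro x hx
  by_contra hx'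
  have hV : IsOpen (U ∩ deriv f ⁻¹' {0}ᶜ) :=
    hf'.isOpen_inter_preimage hU isOpen_compl_singleton
  have hloc : f =ᶠ[𝓝 x] fun _ => v :=
    eventually_of_mem (hV.mem_nhds ⟨hx, hx'⟩) fun y hy => h y hy.1 hy.2
  exact hx' (by rw [hloc.deriv_eq, deriv_const])

end Calculus

section Riccati

variable {c s t H l m l₁ m₁ l₂ m₂ : ℝ}

theorem riccati_first_integral (hH : H ≠ 0) (hsum : s * l + t * m = H)
    (h₁ : s * l₁ + t * m₁ = 0) (h₂ : s * l₂ + t * m₂ = 0)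
    (hl : l * l₂ - 2 * l₁ ^ 2 = c * l ^ 2) (hm : m * m₂ - 2 * m₁ ^ 2 = c * m ^ 2) :
    2 * s * l₁ ^ 2 + c * t * l * m = 0 := by
  have : (2 * s * l₁ ^ 2 + c * t * l * m) * H = 0 := by
    rw [← hsum]
    linear_combination (-(s * t * m)) * hl - (t * t * l) * hm + (t * l * m) * h₂
      + (2 * l * (s * l₁ - t * m₁)) * h₁
  exact (mul_eq_zero.mp this).resolve_right hH

theorem riccati_balanced_of_ne_zero (hc : c ≠ 0) (hl₀ : l ≠ 0) (hl₁ : l₁ ≠ 0)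
    (hA : 2 * s * l₁ ^ 2 + c * t * l * m = 0)
    (hA' : 4 * s * l₁ * l₂ + c * t * (l₁ * m + l * m₁) = 0)
    (h₁ : s * l₁ + t * m₁ = 0) (hl : l * l₂ - 2 * l₁ ^ 2 = c * l ^ 2) :
    s * l = t * m := by
  have : l₁ * (3 * c) * l * (s * l - t * m) = 0 := by
    linear_combination l * hA' - c * l ^ 2 * h₁ - 4 * s * l₁ * hl - 4 * l₁ * hA
  simpa [hc, hl₀, hl₁, sub_eq_zero] using this

end Riccati

theorem deriv_eq_zero_of_riccati_first_integral {f g : ℝ → ℝ} {U : Set ℝ} {c s t H : ℝ}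
    (hU : IsOpen U) (hs : s ≠ 0) (hf : DifferentiableOn ℝ f U)
    (hf' : DifferentiableOn ℝ (deriv f) U) (hg : DifferentiableOn ℝ g U)
    (hf₀ : ∀ x ∈ U, f x ≠ 0) (hsum : ∀ x ∈ U, s * f x + t * g x = H)
    (hderiv : ∀ x ∈ U, s * deriv f x + t * deriv g x = 0)
    (hA : ∀ x ∈ U, 2 * s * deriv f x ^ 2 + c * t * f x * g x = 0)
    (hODE : ∀ x ∈ U, f x * deriv (deriv f) x - 2 * deriv f x ^ 2 = c * f x ^ 2) :
    ∀ x ∈ U, deriv f x = 0 := by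
  rcases eq_or_ne c 0 with rfl | hc
  · intro x hx
    simpa [hs] using hA x hx
  refine hU.deriv_eq_zero_of_deriv_ne_zero_imp_eq hf'.continuousOn (v := H / (2 * s))
    fun x hx hx' => ?_
  have hdiff {φ : ℝ → ℝ} (hφ : DifferentiableOn ℝ φ U) : HasDerivAt φ (deriv φ x) x :=
    ((hφ x hx).differentiableAt (hU.mem_nhds hx)).hasDerivAt
  have hA' := ((((hdiff hf').pow 2).const_mul (2 * s)).add
    (((hdiff hf).const_mul (c * t)).mul (hdiff hg))).eq_zero_of_eqOn_const hU hx hA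
  have hbal := riccati_balanced_of_ne_zero hc (hf₀ x hx) hx' (hA x hx)
    (by linear_combination hA') (hderiv x hx) (hODE x hx)
  rw [eq_div_iff (mul_ne_zero two_ne_zero hs)]
  linarith [hsum x hx]

theorem cmc_triharmonic_ode_rigidity_general
    (c s t H₀ : ℝ) (hs : 0 < s) (ht : 0 < t) (hH₀ : H₀ ≠ 0)
    (a b : ℝ) (lam mu : ℝ → ℝ)
    (hlamC2 : ContDiffOn ℝ 2 lam (Set.Ioo a b))
    (hmuC2 : ContDiffOn ℝ 2 mu (Set.Ioo a b))
    (hlam0 : ∀ x ∈ Set.Ioo a b, lam x ≠ 0)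
    (hsum : ∀ x ∈ Set.Ioo a b, s * lam x + t * mu x = H₀)
    (hODElam : ∀ x ∈ Set.Ioo a b,
      lam x * deriv (deriv lam) x - 2 * (deriv lam x) ^ 2 = c * (lam x) ^ 2)
    (hODEmu : ∀ x ∈ Set.Ioo a b,
      mu x * deriv (deriv mu) x - 2 * (deriv mu x) ^ 2 = c * (mu x) ^ 2) :
    (∀ x ∈ Set.Ioo a b, deriv lam x = 0) ∧
      (∀ x ∈ Set.Ioo a b, ∀ y ∈ Set.Ioo a b, lam x = lam y ∧ mu x = mu y) := by
  have hU : IsOpen (Set.Ioo a b) := isOpen_Ioo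
  have hlam := hlamC2.differentiableOn two_ne_zero
  have hmu := hmuC2.differentiableOn two_ne_zero
  have hlam' := (hlamC2.deriv_of_isOpen hU le_rfl).differentiableOn one_ne_zero
  have hmu' := (hmuC2.deriv_of_isOpen hU le_rfl).differentiableOn one_ne_zero
  have h₁ := mul_deriv_add_mul_deriv_eq_zero hU hlam hmu hsum
  have h₂ := mul_deriv_add_mul_deriv_eq_zero hU hlam' hmu' h₁
  have hA x (hx : x ∈ Set.Ioo a b) := riccati_first_integral hH₀ (hsum x hx) (h₁ x hx) (h₂ x hx)
    (hODElam x hx) (hODEmu x hx)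
  have hlam'0 := deriv_eq_zero_of_riccati_first_integral hU hs.ne' hlam hlam' hmu hlam0 hsum h₁
    hA hODElam
  refine ⟨hlam'0, fun x hx y hy => ?_⟩
  have hlamxy : lam x = lam y :=
    hU.is_const_of_deriv_eq_zero isPreconnected_Ioo hlam hlam'0 hx hy
  refine ⟨hlamxy, mul_left_cancel₀ ht.ne' ?_⟩
  linear_combination hsum x hx - hsum y hy - s * hlamxy

/-- If `λ, μ` are `C²` functions on a nonempty open interval `I = (a, b)`
which vanish nowhere, satisfy `s·λ + t·μ = H₀` (with `s, t > 0`, `H₀ ≠ 0`) and the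
Riccati-type equations `λ·λ'' − 2·λ'² = c·λ²` and `μ·μ'' − 2·μ'² = c·μ²` on `I`,
then `λ'` vanishes identically on `I`; in particular `λ` and `μ` are constant on `I`. -/
theorem cmc_triharmonic_ode_rigidity
    (c s t H₀ : ℝ) (hs : 0 < s) (ht : 0 < t) (hH₀ : H₀ ≠ 0)
    (a b : ℝ) (hab : a < b) (lam mu : ℝ → ℝ)
    (hlamC2 : ContDiffOn ℝ 2 lam (Set.Ioo a b))
    (hmuC2 : ContDiffOn ℝ 2 mu (Set.Ioo a b))
    (hlam0 : ∀ x ∈ Set.Ioo a b, lam x ≠ 0)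
    (hmu0 : ∀ x ∈ Set.Ioo a b, mu x ≠ 0)
    (hsum : ∀ x ∈ Set.Ioo a b, s * lam x + t * mu x = H₀)
    (hODElam : ∀ x ∈ Set.Ioo a b,
      lam x * deriv (deriv lam) x - 2 * (deriv lam x) ^ 2 = c * (lam x) ^ 2)
    (hODEmu : ∀ x ∈ Set.Ioo a b,
      mu x * deriv (deriv mu) x - 2 * (deriv mu x) ^ 2 = c * (mu x) ^ 2) :
    (∀ x ∈ Set.Ioo a b, deriv lam x = 0) ∧
      (∀ x ∈ Set.Ioo a b, ∀ y ∈ Set.Ioo a b, lam x = lam y ∧ mu x = mu y) :=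
  cmc_triharmonic_ode_rigidity_general c s t H₀ hs ht hH₀ a b lam mu hlamC2 hmuC2 hlam0 hsum hODElam
    hODEmu
end

section
/- Let n be a positive real number, let k ≥ 3 be an integer, and let H be a nonzero real number. Set S = (n/2)·(1 + √(1 + 4(k−2)H²)). Then S ≥ n·H² if and only if H² ≤ k − 1; moreover S = n·H² if and only if H² = k − 1. -/
/-- For `n > 0` real, integer `k ≥ 3`, `H ≠ 0`, setting
`S = (n/2)(1 + √(1 + 4(k−2)H²))`, one has `S ≥ nH² ↔ H² ≤ k − 1`, and
`S = nH² ↔ H² = k − 1`. -/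
theorem kharmonic_H_bound (n : ℝ) (hn : 0 < n) (k : ℤ) (hk : 3 ≤ k)
    (H : ℝ) (hH : H ≠ 0) (S : ℝ)
    (hSdef : S = n / 2 * (1 + Real.sqrt (1 + 4 * ((k : ℝ) - 2) * H ^ 2))) :
    (S ≥ n * H ^ 2 ↔ H ^ 2 ≤ (k : ℝ) - 1) ∧
      (S = n * H ^ 2 ↔ H ^ 2 = (k : ℝ) - 1) := by
  have hx : 0 < H ^ 2 := by positivity
  have hk' : (3 : ℝ) ≤ (k : ℝ) := by exact_mod_cast hk
  set x := H ^ 2 with hxdef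
  have hD : 0 ≤ 1 + 4 * ((k : ℝ) - 2) * x := by nlinarith
  set s := Real.sqrt (1 + 4 * ((k : ℝ) - 2) * x) with hsdef
  have hs0 : 0 ≤ s := Real.sqrt_nonneg _
  have hs2 : s ^ 2 = 1 + 4 * ((k : ℝ) - 2) * x := Real.sq_sqrt hD
  constructor
  · constructor
    · intro hS
      have h1 : 1 + s ≥ 2 * x := by
        rw [hSdef] at hS
        nlinarith
      rcases le_or_gt (2 * x - 1) 0 with h | h
      · nlinarith
      · nlinarith [sq_nonneg (s - (2 * x - 1))]
    · intro hle
      have h1 : s ≥ 2 * x - 1 := by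
        rcases le_or_gt (2 * x - 1) 0 with h | h
        · linarith
        · nlinarith [sq_nonneg (s + (2 * x - 1)), sq_nonneg (s - (2 * x - 1))]
      rw [hSdef]; nlinarith
  · constructor
    · intro hS
      have h1 : 1 + s = 2 * x := by
        rw [hSdef] at hS
        have h2 : n * (1 + s) = n * (2 * x) := by ring_nf; ring_nf at hS; linarith
        have := mul_left_cancel₀ (ne_of_gt hn) h2
        linarith
      nlinarith
    · intro heq
      have h1 : s = 2 * x - 1 := by
        have h2 : s ^ 2 = (2 * x - 1) ^ 2 := by rw [hs2]; nlinarith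
        have h3 : 0 < 2 * x - 1 := by nlinarith
        nlinarith [sq_nonneg (s - (2 * x - 1)), sq_nonneg (s + (2 * x - 1))]
      rw [hSdef, h1]; ring
end

section
/- For all integers n ≥ 3 and k ≥ 3, there exists a unique real number t₀ with t₁ < t₀ < k − 1 and f_{n,k}(t₀) = 0. Moreover t₀ > 0, f_{n,k}(t) > 0 for every real t > t₀ (so t₀ is the largest real root of f_{n,k}), and f'_{n,k}(t₀) > 0 (so t₀ is a simple root). -/
/-!
Since `f(t₁) < 0 < f(k − 1)`, the cubic has a root in `(t₁, k − 1)`. The heart of the matter is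
that on `[t₁, ∞)` the derivative `f'` is positive wherever `f ≥ 0`: on `[t₁, 0]` we have `f < 0`,
and for `t > 0` a polynomial estimate gives `3 f(t) < t f'(t)` as soon as `f'(t) ≤ 0`. By a
continuous induction, a function with this property is positive everywhere to the right of any
point of `[t₁, ∞)` where it is nonnegative. Hence the root is the only one to the right of `t₁`,
it is the largest root, and it is simple.
-/

/-- The cubic polynomial `f_{n,k}` from Theorem 1.4 of the paper. -/
noncomputable def fnk (n k : ℤ) (t : ℝ) : ℝ :=
  (n : ℝ) ^ 4 * t ^ 3
    - (n : ℝ) ^ 2 * (((k : ℝ) - 1) * (n : ℝ) ^ 2 - 2 * ((k : ℝ) + 2) * (n : ℝ)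
        + 2 * ((k : ℝ) + 2)) * t ^ 2
    - ((n : ℝ) - 1) * (3 * (n : ℝ) - ((k : ℝ) + 2)) * (((k : ℝ) - 1) * (n : ℝ)
        - ((k : ℝ) + 2)) * t
    - ((n : ℝ) - 1) * ((n : ℝ) - 2) ^ 2

/-- The derivative `f'_{n,k}` of the cubic `f_{n,k}`. -/
noncomputable def fnk' (n k : ℤ) (t : ℝ) : ℝ :=
  3 * (n : ℝ) ^ 4 * t ^ 2
    - 2 * (n : ℝ) ^ 2 * (((k : ℝ) - 1) * (n : ℝ) ^ 2 - 2 * ((k : ℝ) + 2) * (n : ℝ)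
        + 2 * ((k : ℝ) + 2)) * t
    - ((n : ℝ) - 1) * (3 * (n : ℝ) - ((k : ℝ) + 2)) * (((k : ℝ) - 1) * (n : ℝ)
        - ((k : ℝ) + 2))

/-- The quantity `t₁ = (n² + 2(n−1)(k−6))/(2n²)`. -/
noncomputable def tOne (n k : ℤ) : ℝ :=
  ((n : ℝ) ^ 2 + 2 * ((n : ℝ) - 1) * ((k : ℝ) - 6)) / (2 * (n : ℝ) ^ 2)

open Set Filter Topology

lemma HasDerivAt.eventually_nhdsGT_lt_of_pos {f : ℝ → ℝ} {f' x : ℝ} (hf : HasDerivAt f f' x)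
    (hf' : 0 < f') : ∀ᶠ y in 𝓝[>] x, f x < f y := by
  filter_upwards [(hasDerivAt_iff_tendsto_slope_left_right.1 hf).2.eventually
    (eventually_gt_nhds hf'), self_mem_nhdsWithin] with y hslope hxy
  exact (slope_pos_iff_of_le hxy.le).1 hslope

lemma pos_of_lt_of_forall_nonneg_imp_deriv_pos {f f' : ℝ → ℝ} {a s t : ℝ}
    (hf : ∀ x, HasDerivAt f (f' x) x) (hpos : ∀ x, a ≤ x → 0 ≤ f x → 0 < f' x)
    (has : a ≤ s) (hfs : 0 ≤ f s) (hst : s < t) : 0 < f t := by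
  have hcont : Continuous f := continuous_iff_continuousAt.2 fun x ↦ (hf x).continuousAt
  have hnonneg : Icc s t ⊆ {x | 0 ≤ f x} := by
    refine ((isClosed_le continuous_const hcont).inter
      isClosed_Icc).Icc_subset_of_forall_mem_nhdsWithin hfs fun x ⟨hx, hsx, _⟩ ↦ ?_
    filter_upwards [(hf x).eventually_nhdsGT_lt_of_pos (hpos x (has.trans hsx) hx)] with y hy
    exact hx.trans hy.le
  have hmono : StrictMonoOn f (Icc s t) :=
    strictMonoOn_of_hasDerivWithinAt_pos (convex_Icc s t) hcont.continuousOn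
      (fun x _ ↦ (hf x).hasDerivWithinAt) fun x hx ↦ by
        rw [interior_Icc] at hx
        exact hpos x (has.trans hx.1.le) (hnonneg (Ioo_subset_Icc_self hx))
  exact hfs.trans_lt (hmono (left_mem_Icc.2 hst.le) (right_mem_Icc.2 hst.le) hst)

lemma hasDerivAt_fnk (n k : ℤ) (t : ℝ) : HasDerivAt (fnk n k) (fnk' n k t) t := by
  unfold fnk fnk'
  refine ((((hasDerivAt_pow 3 t).const_mul _).sub ((hasDerivAt_pow 2 t).const_mul _)).sub
    ((hasDerivAt_id' t).const_mul _)).sub_const _ |>.congr_deriv ?_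
  push_cast
  ring

/- With `n = u + 3` and `k = v + 3`, the polynomial inequalities in `n, k` below become
polynomials in `u, v ≥ 0` with positive coefficients. -/
lemma exists_nonneg_eq_add_three {n : ℤ} (hn : 3 ≤ n) : ∃ u : ℝ, 0 ≤ u ∧ (n : ℝ) = u + 3 :=
  ⟨n - 3, sub_nonneg.2 (by exact_mod_cast hn), by ring⟩

section

variable {n k : ℤ}

lemma tOne_lt_sub_one (hn : 3 ≤ n) (hk : 3 ≤ k) : tOne n k < k - 1 := by
  obtain ⟨u, hu, hnu⟩ := exists_nonneg_eq_add_three hn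
  obtain ⟨v, hv, hkv⟩ := exists_nonneg_eq_add_three hk
  rw [tOne, div_lt_iff₀ (by rw [hnu]; positivity), hnu, hkv, ← sub_pos]
  ring_nf
  positivity

lemma fnk_tOne_neg (hn : 3 ≤ n) (hk : 3 ≤ k) : fnk n k (tOne n k) < 0 := by
  obtain ⟨u, hu, hnu⟩ := exists_nonneg_eq_add_three hn
  obtain ⟨v, hv, hkv⟩ := exists_nonneg_eq_add_three hk
  have hn6 : (0 : ℝ) < 8 * (n : ℝ) ^ 6 := by rw [hnu]; positivity
  rw [← neg_pos, ← mul_pos_iff_of_pos_right hn6, fnk, tOne]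
  field_simp
  rw [hnu, hkv]
  ring_nf
  positivity

lemma fnk_sub_one_pos (hn : 3 ≤ n) (hk : 3 ≤ k) : 0 < fnk n k (k - 1) := by
  obtain ⟨u, hu, hnu⟩ := exists_nonneg_eq_add_three hn
  obtain ⟨v, hv, hkv⟩ := exists_nonneg_eq_add_three hk
  rw [fnk, hnu, hkv]
  ring_nf
  positivity

lemma fnk_neg_of_tOne_le_of_nonpos (hn : 3 ≤ n) (hk : 3 ≤ k) {t : ℝ} (h1 : tOne n k ≤ t)
    (h0 : t ≤ 0) : fnk n k t < 0 := by
  have hn2 : (0 : ℝ) < 2 * (n : ℝ) ^ 2 := by positivity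
  rw [tOne, div_le_iff₀ hn2] at h1
  have hu : (0 : ℝ) ≤ n - 3 := sub_nonneg.2 (by exact_mod_cast hn)
  have hv : (0 : ℝ) ≤ k - 3 := sub_nonneg.2 (by exact_mod_cast hk)
  unfold fnk
  nlinarith [mul_nonneg (mul_nonneg hu hu) hv, mul_nonneg hu (neg_nonneg.2 h0),
    mul_nonneg (sq_nonneg ((n : ℝ) * t)) hu, sq_nonneg ((n : ℝ) * t + 1),
    sq_nonneg ((n : ℝ) ^ 2 * t),
    sq_nonneg (2 * (n : ℝ) ^ 2 * t - (n : ℝ) ^ 2 - 2 * ((n : ℝ) - 1) * ((k : ℝ) - 6))]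

lemma three_mul_fnk_lt_mul_fnk' (hn : 3 ≤ n) (hk : 3 ≤ k) {t : ℝ} (h1 : tOne n k ≤ t) (h0 : 0 < t)
    (hf' : fnk' n k t ≤ 0) : 3 * fnk n k t < t * fnk' n k t := by
  have hn2 : (0 : ℝ) < 2 * (n : ℝ) ^ 2 := by positivity
  rw [tOne, div_le_iff₀ hn2] at h1
  have hu : (0 : ℝ) ≤ n - 3 := sub_nonneg.2 (by exact_mod_cast hn)
  have hv : (0 : ℝ) ≤ k - 3 := sub_nonneg.2 (by exact_mod_cast hk)
  unfold fnk' at hf'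
  unfold fnk fnk'
  nlinarith [mul_nonneg hu h0.le, mul_nonneg (mul_nonneg hu hv) h0.le,
    mul_nonneg (sub_nonneg.2 h1) hv, sq_nonneg ((n : ℝ) * t - 1)]

lemma fnk'_pos_of_tOne_le_of_nonneg (hn : 3 ≤ n) (hk : 3 ≤ k) {t : ℝ} (h1 : tOne n k ≤ t)
    (hf : 0 ≤ fnk n k t) : 0 < fnk' n k t := by
  by_contra! hf'
  rcases le_or_gt t 0 with h0 | h0
  · exact (fnk_neg_of_tOne_le_of_nonpos hn hk h1 h0).not_ge hf
  · nlinarith [three_mul_fnk_lt_mul_fnk' hn hk h1 h0 hf', mul_nonpos_of_nonneg_of_nonpos h0.le hf']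

end

/-- For integers `n ≥ 3` and `k ≥ 3`, there is a unique real `t₀` with
`t₁ < t₀ < k − 1` and `f_{n,k}(t₀) = 0`; moreover `t₀ > 0`, `f_{n,k}(t) > 0` for all
`t > t₀` (so `t₀` is the largest real root) and `f'_{n,k}(t₀) > 0` (so `t₀` is simple). -/
theorem largest_root_of_fnk (n k : ℤ) (hn : 3 ≤ n) (hk : 3 ≤ k) :
    ∃ t₀ : ℝ, (tOne n k < t₀ ∧ t₀ < (k : ℝ) - 1 ∧ fnk n k t₀ = 0) ∧
      (∀ t : ℝ, tOne n k < t → t < (k : ℝ) - 1 → fnk n k t = 0 → t = t₀) ∧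
      0 < t₀ ∧ (∀ t : ℝ, t₀ < t → 0 < fnk n k t) ∧ 0 < fnk' n k t₀ := by
  have hf := hasDerivAt_fnk n k
  have hpos {s t : ℝ} (hs : tOne n k ≤ s) (hfs : fnk n k s = 0) (hst : s < t) :
      0 < fnk n k t :=
    pos_of_lt_of_forall_nonneg_imp_deriv_pos hf
      (fun _ hx hfx ↦ fnk'_pos_of_tOne_le_of_nonneg hn hk hx hfx) hs hfs.ge hst
  obtain ⟨t₀, ⟨ht₁, htk⟩, hroot⟩ := intermediate_value_Ioo (tOne_lt_sub_one hn hk).le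
    (continuous_iff_continuousAt.2 fun t ↦ (hf t).continuousAt).continuousOn
    ⟨fnk_tOne_neg hn hk, fnk_sub_one_pos hn hk⟩
  refine ⟨t₀, ⟨ht₁, htk, hroot⟩, fun t ht₁' _ ht ↦ ?_, ?_, fun t ↦ hpos ht₁.le hroot,
    fnk'_pos_of_tOne_le_of_nonneg hn hk ht₁.le hroot.ge⟩
  · rcases lt_trichotomy t t₀ with h | h | h
    · exact absurd hroot (hpos ht₁'.le ht h).ne'
    · exact h
    · exact absurd ht (hpos ht₁.le hroot h).ne'
  · by_contra! h
    exact (fnk_neg_of_tOne_le_of_nonpos hn hk ht₁.le h).ne hroot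
end

section
/- For all integers n ≥ 3 and k ≥ 3, the following identities and inequalities hold: f_{n,k}(t₁) = −((n−2)²/(8n²))·((n−2)² + 2(n−1)k)·(4(n−1)(k−6)(k−2) + n²(2k−3)) < 0, and f'_{n,k}(t₁) = −(1/4)·(n−2)²·(8(n−1)(k−4)(k−2) + n²(4k−7)) < 0. -/
/-- For integers `n ≥ 3` and `k ≥ 3`, explicit values of `f_{n,k}(t₁)` and
`f'_{n,k}(t₁)`, both strictly negative. -/
theorem fnk_at_tOne (n k : ℤ) (hn : 3 ≤ n) (hk : 3 ≤ k) :
    fnk n k (tOne n k) =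
        -(((n : ℝ) - 2) ^ 2 / (8 * (n : ℝ) ^ 2)) * (((n : ℝ) - 2) ^ 2
          + 2 * ((n : ℝ) - 1) * (k : ℝ)) * (4 * ((n : ℝ) - 1) * ((k : ℝ) - 6)
          * ((k : ℝ) - 2) + (n : ℝ) ^ 2 * (2 * (k : ℝ) - 3)) ∧
      fnk n k (tOne n k) < 0 ∧
      fnk' n k (tOne n k) =
        -(1 / 4) * ((n : ℝ) - 2) ^ 2 * (8 * ((n : ℝ) - 1) * ((k : ℝ) - 4)
          * ((k : ℝ) - 2) + (n : ℝ) ^ 2 * (4 * (k : ℝ) - 7)) ∧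
      fnk' n k (tOne n k) < 0 := by
  have hn' : (3:ℝ) ≤ (n:ℝ) := by exact_mod_cast hn
  have hk' : (3:ℝ) ≤ (k:ℝ) := by exact_mod_cast hk
  have hn0 : (n:ℝ) ≠ 0 := by linarith
  have h1 : fnk n k (tOne n k) =
      -(((n : ℝ) - 2) ^ 2 / (8 * (n : ℝ) ^ 2)) * (((n : ℝ) - 2) ^ 2
        + 2 * ((n : ℝ) - 1) * (k : ℝ)) * (4 * ((n : ℝ) - 1) * ((k : ℝ) - 6)
        * ((k : ℝ) - 2) + (n : ℝ) ^ 2 * (2 * (k : ℝ) - 3)) := by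
    unfold fnk tOne
    field_simp
    ring
  have h2 : fnk' n k (tOne n k) =
      -(1 / 4) * ((n : ℝ) - 2) ^ 2 * (8 * ((n : ℝ) - 1) * ((k : ℝ) - 4)
        * ((k : ℝ) - 2) + (n : ℝ) ^ 2 * (4 * (k : ℝ) - 7)) := by
    unfold fnk' tOne
    field_simp
    ring
  have hA : (0:ℝ) < 4 * ((n : ℝ) - 1) * ((k : ℝ) - 6) * ((k : ℝ) - 2)
      + (n : ℝ) ^ 2 * (2 * (k : ℝ) - 3) := by
    nlinarith [sq_nonneg ((n:ℝ)-2), sq_nonneg ((n:ℝ)*((k:ℝ)-3)), mul_nonneg (mul_nonneg (by linarith : (0:ℝ) ≤ (n:ℝ)-3) (by linarith : (0:ℝ) ≤ (k:ℝ)-3)) (by linarith : (0:ℝ) ≤ (k:ℝ)-2), sq_nonneg ((k:ℝ)-3)]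
  have hB : (0:ℝ) < 8 * ((n : ℝ) - 1) * ((k : ℝ) - 4) * ((k : ℝ) - 2)
      + (n : ℝ) ^ 2 * (4 * (k : ℝ) - 7) := by
    nlinarith [sq_nonneg ((n:ℝ)-2), sq_nonneg ((k:ℝ)-3), mul_nonneg (mul_nonneg (by linarith : (0:ℝ) ≤ (n:ℝ)-3) (by linarith : (0:ℝ) ≤ (k:ℝ)-3)) (by linarith : (0:ℝ) ≤ (k:ℝ)-2), sq_nonneg ((n:ℝ)*((k:ℝ)-3))]
  have hsq : (0:ℝ) < ((n : ℝ) - 2) ^ 2 := by nlinarith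
  have hpos1 : (0:ℝ) < ((n : ℝ) - 2) ^ 2 / (8 * (n : ℝ) ^ 2) := by
    apply div_pos hsq; positivity
  have hpos2 : (0:ℝ) < ((n : ℝ) - 2) ^ 2 + 2 * ((n : ℝ) - 1) * (k : ℝ) := by nlinarith
  refine ⟨h1, ?_, h2, ?_⟩
  · rw [h1]; nlinarith [mul_pos (mul_pos hpos1 hpos2) hA]
  · rw [h2]; nlinarith [mul_pos hsq hB]
end

section
/- For all integers n and m with 1 ≤ m < n, the cubic polynomial P_{n,m}(x) = 3n·x³ − (2n+5m)·x² + 5m·x − m has exactly one real root, and this root lies in the open interval (0, 1). -/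
/-!
Since `P(0) = -m < 0 < n - m = P(1)`, the intermediate value theorem gives a root in `(0, 1)`.
It is the only real root because the discriminant
`-m (n - m) (125 m² - 125 m n + 32 n²)` is negative, whereas a real cubic with two distinct
real roots splits over `ℝ`, and its discriminant `a⁴ ((x - y) (x - z) (y - z))²` is a square.
-/

open Polynomial Set

namespace Cubic

variable {K : Type*}

theorem eval_toPoly [CommSemiring K] (P : Cubic K) (x : K) :
    P.toPoly.eval x = P.a * x ^ 3 + P.b * x ^ 2 + P.c * x + P.d := by
  simp [toPoly]

theorem eq_mk_of_two_roots [Field K] (P : Cubic K) (ha : P.a ≠ 0) {x y : K}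
    (hx : P.toPoly.eval x = 0) (hy : P.toPoly.eval y = 0) (hxy : x ≠ y) :
    let z := -P.b / P.a - x - y
    P = ⟨P.a, P.a * -(x + y + z), P.a * (x * y + x * z + y * z), P.a * -(x * y * z)⟩ := by
  intro z
  rw [eval_toPoly] at hx hy
  have hb : P.b = P.a * -(x + y + z) := by simp only [z]; field_simp; ring
  have hc : P.c = P.a * (x * y + x * z + y * z) := by
    refine mul_left_cancel₀ (sub_ne_zero.mpr hxy) ?_
    linear_combination hx - hy - (x ^ 2 - y ^ 2) * hb
  have hd : P.d = P.a * -(x * y * z) := by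
    linear_combination hx - x ^ 2 * hb - x * hc
  ext <;> simp only [hb, hc, hd]

theorem discr_nonneg_of_eval_eq_zero [Field K] [LinearOrder K] [IsStrictOrderedRing K]
    (P : Cubic K) (ha : P.a ≠ 0) {x y : K} (hx : P.toPoly.eval x = 0)
    (hy : P.toPoly.eval y = 0) (hxy : x ≠ y) : 0 ≤ P.discr := by
  rw [P.eq_mk_of_two_roots ha hx hy hxy, discr]
  set z := -P.b / P.a - x - y
  nlinarith [sq_nonneg (P.a ^ 2 * ((x - y) * (x - z) * (y - z)))]

theorem eq_of_eval_eq_zero_of_discr_neg [Field K] [LinearOrder K] [IsStrictOrderedRing K]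
    (P : Cubic K) (ha : P.a ≠ 0) (hP : P.discr < 0) {x y : K} (hx : P.toPoly.eval x = 0)
    (hy : P.toPoly.eval y = 0) : x = y := by
  by_contra hxy
  exact hP.not_ge (P.discr_nonneg_of_eval_eq_zero ha hx hy hxy)

end Cubic

def Pnm (n m : ℝ) : Cubic ℝ := ⟨3 * n, -(2 * n + 5 * m), 5 * m, -m⟩

section Pnm

variable {n m : ℝ}

theorem eval_Pnm (x : ℝ) :
    (Pnm n m).toPoly.eval x = 3 * n * x ^ 3 - (2 * n + 5 * m) * x ^ 2 + 5 * m * x - m := by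
  rw [Cubic.eval_toPoly, Pnm]
  ring

theorem discr_Pnm :
    (Pnm n m).discr = -(m * (n - m) * (125 * m ^ 2 - 125 * m * n + 32 * n ^ 2)) := by
  rw [Cubic.discr, Pnm]
  ring

theorem discr_Pnm_neg (hm : 0 < m) (hmn : m < n) : (Pnm n m).discr < 0 := by
  have hq : 0 < 125 * m ^ 2 - 125 * m * n + 32 * n ^ 2 := by
    nlinarith [sq_nonneg (2 * m - n), sq_pos_of_pos (hm.trans hmn)]
  rw [discr_Pnm, neg_neg_iff_pos]
  exact mul_pos (mul_pos hm (sub_pos.mpr hmn)) hq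

theorem exists_eval_Pnm_eq_zero_mem_Ioo (hm : 0 < m) (hmn : m < n) :
    ∃ x ∈ Ioo (0 : ℝ) 1, (Pnm n m).toPoly.eval x = 0 := by
  have h0 : (Pnm n m).toPoly.eval 0 < 0 := by rw [eval_Pnm]; linarith
  have h1 : 0 < (Pnm n m).toPoly.eval 1 := by rw [eval_Pnm]; linarith
  exact intermediate_value_Ioo zero_le_one (Polynomial.continuousOn _) ⟨h0, h1⟩

end Pnm

/-- For integers `1 ≤ m < n`, the cubic
`P_{n,m}(x) = 3nx³ − (2n+5m)x² + 5mx − m` has exactly one real root,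
and this root lies in `(0, 1)`. -/
theorem Pnm_unique_real_root (n m : ℤ) (hm : 1 ≤ m) (hmn : m < n) :
    ∃ x : ℝ, (3 * (n : ℝ) * x ^ 3 - (2 * (n : ℝ) + 5 * (m : ℝ)) * x ^ 2
        + 5 * (m : ℝ) * x - (m : ℝ) = 0) ∧ 0 < x ∧ x < 1 ∧
      ∀ y : ℝ, (3 * (n : ℝ) * y ^ 3 - (2 * (n : ℝ) + 5 * (m : ℝ)) * y ^ 2
        + 5 * (m : ℝ) * y - (m : ℝ) = 0) → y = x := by
  have hm' : (0 : ℝ) < m := by exact_mod_cast hm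
  have hmn' : (m : ℝ) < n := by exact_mod_cast hmn
  have ha : (Pnm n m).a ≠ 0 := (mul_pos three_pos (hm'.trans hmn')).ne'
  simp only [← eval_Pnm]
  obtain ⟨x, ⟨hx0, hx1⟩, hx⟩ := exists_eval_Pnm_eq_zero_mem_Ioo hm' hmn'
  exact ⟨x, hx, hx0, hx1, fun y hy =>
    (Pnm n m).eq_of_eval_eq_zero_of_discr_neg ha (discr_Pnm_neg hm' hmn') hy hx⟩
end
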